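/- For c > 6 − 4√2, the derivative of g(h) = (√(e^{4h}+4e^{2h}) − e^{2h})/2 satisfies g′(ξ) < c for all ξ ∈ ℝ; and for 0 < c ≤ 6 − 4√2, g′(ξ) > c if and only if (1/2)·log α₋(c) < ξ < (1/2)·log α₊(c), where α±(c) = (−(c²+8c−4) ± (2−c)√(c²−12c+4))/(4c). -/
import Mathlib


noncomputable def gH (h : ℝ) : ℝ :=
  (Real.sqrt (Real.exp (4 * h) + 4 * Real.exp (2 * h)) - Real.exp (2 * h)) / 2

lemma gH_deriv (ξ : ℝ) :
    deriv gH ξ = Real.exp (2*ξ) * (Real.exp (2*ξ) + 2) /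
      Real.sqrt (Real.exp (2*ξ)^2 + 4*Real.exp (2*ξ)) - Real.exp (2*ξ) := by
  have hX : 0 < Real.exp (2*ξ) := Real.exp_pos _
  have hE : Real.exp (4*ξ) = Real.exp (2*ξ)^2 := by
    rw [sq, ← Real.exp_add]; ring_nf
  have hupos : 0 < Real.exp (4*ξ) + 4 * Real.exp (2*ξ) := by positivity
  have h4 : HasDerivAt (fun h : ℝ => Real.exp (4*h)) (Real.exp (4*ξ) * 4) ξ := by
    have := ((hasDerivAt_id ξ).const_mul (4:ℝ)).exp
    simpa using this
  have h2 : HasDerivAt (fun h : ℝ => Real.exp (2*h)) (Real.exp (2*ξ) * 2) ξ := by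
    have := ((hasDerivAt_id ξ).const_mul (2:ℝ)).exp
    simpa using this
  have hu : HasDerivAt (fun h : ℝ => Real.exp (4*h) + 4 * Real.exp (2*h))
      (Real.exp (4*ξ) * 4 + 4 * (Real.exp (2*ξ) * 2)) ξ := h4.add (h2.const_mul 4)
  have hs : HasDerivAt (fun h : ℝ => Real.sqrt (Real.exp (4*h) + 4 * Real.exp (2*h)))
      ((Real.exp (4*ξ) * 4 + 4 * (Real.exp (2*ξ) * 2)) /
        (2 * Real.sqrt (Real.exp (4*ξ) + 4 * Real.exp (2*ξ)))) ξ :=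
    hu.sqrt (ne_of_gt hupos)
  have hg : HasDerivAt gH
      (((Real.exp (4*ξ) * 4 + 4 * (Real.exp (2*ξ) * 2)) /
        (2 * Real.sqrt (Real.exp (4*ξ) + 4 * Real.exp (2*ξ))) - Real.exp (2*ξ) * 2) / 2) ξ :=
    (hs.sub h2).div_const 2
  rw [hg.deriv]
  rw [hE]
  have hspos : 0 < Real.sqrt (Real.exp (2*ξ)^2 + 4*Real.exp (2*ξ)) :=
    Real.sqrt_pos.mpr (by positivity)
  field_simp
  ring

lemma sign_lemma (c x : ℝ) (hx : 0 < x) (hc : 0 < c) :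
    (c < x*(x+2)/Real.sqrt (x^2+4*x) - x ↔
      2*c*x^2 + (c^2+8*c-4)*x + 4*c^2 < 0) ∧
    (x*(x+2)/Real.sqrt (x^2+4*x) - x < c ↔
      0 < 2*c*x^2 + (c^2+8*c-4)*x + 4*c^2) := by
  set s := Real.sqrt (x^2+4*x) with hs
  have hspos : 0 < s := Real.sqrt_pos.mpr (by positivity)
  have hs2 : s^2 = x^2+4*x := Real.sq_sqrt (by positivity)
  have hiff1 : c < x*(x+2)/s - x ↔ (c+x)*s < x*(x+2) := by
    rw [lt_sub_iff_add_lt, ← lt_div_iff₀ hspos]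
  have hiff2 : x*(x+2)/s - x < c ↔ x*(x+2) < (c+x)*s := by
    rw [sub_lt_iff_lt_add, ← div_lt_iff₀ hspos]
  have key : (x*(x+2) - (c+x)*s) * (x*(x+2) + (c+x)*s)
      = -x * (2*c*x^2 + (c^2+8*c-4)*x + 4*c^2) := by
    have : (x*(x+2) - (c+x)*s) * (x*(x+2) + (c+x)*s)
        = (x*(x+2))^2 - (c+x)^2 * s^2 := by ring
    rw [this, hs2]; ring
  have hP : 0 < x*(x+2) + (c+x)*s := by nlinarith
  constructor
  · rw [hiff1]
    constructor
    · intro h; nlinarith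
    · intro h; nlinarith
  · rw [hiff2]
    constructor
    · intro h; nlinarith
    · intro h; nlinarith

lemma quad_iff (c : ℝ) (hc : 0 < c) (hc2 : c ≤ 6 - 4*Real.sqrt 2) (x : ℝ) :
    0 < (-(c^2+8*c-4) - (2-c)*Real.sqrt (c^2-12*c+4))/(4*c) ∧
    0 < (-(c^2+8*c-4) + (2-c)*Real.sqrt (c^2-12*c+4))/(4*c) ∧
    (2*c*x^2 + (c^2+8*c-4)*x + 4*c^2 < 0 ↔
      (-(c^2+8*c-4) - (2-c)*Real.sqrt (c^2-12*c+4))/(4*c) < x ∧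
      x < (-(c^2+8*c-4) + (2-c)*Real.sqrt (c^2-12*c+4))/(4*c)) := by
  have hs2 : Real.sqrt 2 ^ 2 = 2 := Real.sq_sqrt (by norm_num)
  have h141 : (1.41:ℝ) < Real.sqrt 2 := by nlinarith [Real.sqrt_nonneg 2]
  have h142 : Real.sqrt 2 < 1.5 := by nlinarith [Real.sqrt_nonneg 2]
  have hcu : c < 0.36 := by linarith
  have hb : c^2+8*c-4 < 0 := by nlinarith
  have hdisc : 0 ≤ c^2-12*c+4 := by
    nlinarith [mul_nonneg (by linarith : (0:ℝ) ≤ 6 - 4*Real.sqrt 2 - c)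
      (by nlinarith : (0:ℝ) ≤ 6 + 4*Real.sqrt 2 - c)]
  set D := Real.sqrt (c^2-12*c+4) with hD
  have hD0 : 0 ≤ D := Real.sqrt_nonneg _
  have hD2 : D^2 = c^2-12*c+4 := Real.sq_sqrt hdisc
  have hkey : ((2-c)*D)^2 = (c^2+8*c-4)^2 - 32*c^3 := by
    rw [mul_pow, hD2]; ring
  have h2c : (0:ℝ) < 2 - c := by linarith
  have hud : 0 ≤ (2-c)*D := mul_nonneg (by linarith) hD0
  have hlt : (2-c)*D < -(c^2+8*c-4) := by
    nlinarith [pow_pos hc 3]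
  set A := (-(c^2+8*c-4) - (2-c)*D)/(4*c) with hA
  set B := (-(c^2+8*c-4) + (2-c)*D)/(4*c) with hB
  have h4c : (0:ℝ) < 4*c := by linarith
  have hApos : 0 < A := div_pos (by linarith) h4c
  have hAB : A ≤ B := by
    apply (div_le_div_iff_of_pos_right h4c).mpr; linarith
  have hsum : 2*c*(A+B) = -(c^2+8*c-4) := by
    rw [hA, hB]; field_simp; ring
  have hprod : A*B = 2*c := by
    rw [hA, hB]
    rw [div_mul_div_comm]
    have : (-(c ^ 2 + 8 * c - 4) - (2 - c) * D) * (-(c ^ 2 + 8 * c - 4) + (2 - c) * D)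
        = (c^2+8*c-4)^2 - ((2-c)*D)^2 := by ring
    rw [this, hkey]
    field_simp; ring
  have hfac : 2*c*x^2 + (c^2+8*c-4)*x + 4*c^2 = 2*c*((x-A)*(x-B)) := by
    linear_combination x*hsum - 2*c*hprod
  refine ⟨hApos, lt_of_lt_of_le hApos hAB, ?_⟩
  rw [hfac]
  constructor
  · intro h
    have h' : (x-A)*(x-B) < 0 := by
      by_contra hcon
      exact absurd h (not_lt.mpr (mul_nonneg (by linarith) (not_lt.mp hcon)))
    rcases mul_neg_iff.mp h' with ⟨h1, h2⟩ | ⟨h1, h2⟩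
    · constructor <;> linarith
    · linarith
  · rintro ⟨h1, h2⟩
    exact mul_neg_of_pos_of_neg (by linarith) (mul_neg_of_pos_of_neg (by linarith) (by linarith))

lemma part1_quad (c x : ℝ) (hx : 0 < x) (hc : 6 - 4*Real.sqrt 2 < c) :
    0 < 2*c*x^2 + (c^2+8*c-4)*x + 4*c^2 := by
  have hs2 : Real.sqrt 2 ^ 2 = 2 := Real.sq_sqrt (by norm_num)
  have h142 : Real.sqrt 2 < 1.5 := by nlinarith [Real.sqrt_nonneg 2]
  have hc0 : 0 < c := by linarith
  rcases le_or_gt 0 (c^2+8*c-4) with hb | hb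
  · nlinarith [mul_nonneg hb hx.le, mul_pos (mul_pos hc0 hx) hx]
  · have hc2 : c < 2 := by nlinarith
    have hneg : 0 < -(c^2-12*c+4) := by
      nlinarith [mul_pos (by linarith : (0:ℝ) < c - (6 - 4*Real.sqrt 2))
        (by nlinarith : (0:ℝ) < 6 + 4*Real.sqrt 2 - c)]
    have h32 : 0 < 32*c^3 - (c^2+8*c-4)^2 := by
      nlinarith [mul_pos (mul_pos (by linarith : (0:ℝ) < 2-c) (by linarith : (0:ℝ) < 2-c)) hneg]
    nlinarith [sq_nonneg (4*c*x + (c^2+8*c-4))]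

/-- for `c > 6−4√2`, `g′(ξ) < c` for all `ξ`; for `0 < c ≤ 6−4√2`,
`g′(ξ) > c` iff `(1/2)·log α₋(c) < ξ < (1/2)·log α₊(c)`, where
`α±(c) = (−(c²+8c−4) ± (2−c)√(c²−12c+4))/(4c)`. -/
theorem stmt12 (c : ℝ) :
    (6 - 4 * Real.sqrt 2 < c → ∀ ξ : ℝ, deriv gH ξ < c) ∧
    (0 < c → c ≤ 6 - 4 * Real.sqrt 2 → ∀ ξ : ℝ,
      (c < deriv gH ξ ↔
        (1 / 2) * Real.log
            ((-(c ^ 2 + 8 * c - 4) - (2 - c) * Real.sqrt (c ^ 2 - 12 * c + 4)) / (4 * c)) < ξ ∧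
        ξ < (1 / 2) * Real.log
            ((-(c ^ 2 + 8 * c - 4) + (2 - c) * Real.sqrt (c ^ 2 - 12 * c + 4)) / (4 * c)))) := by
  constructor
  · intro hc ξ
    have hc0 : 0 < c := by
      have h142 : Real.sqrt 2 < 1.5 := by
        nlinarith [Real.sqrt_nonneg 2, Real.sq_sqrt (by norm_num : (0:ℝ) ≤ 2)]
      linarith
    rw [gH_deriv]
    set x := Real.exp (2*ξ) with hxdef
    have hx : 0 < x := Real.exp_pos _
    exact ((sign_lemma c x hx hc0).2).mpr (part1_quad c x hx hc)
  · intro hc hc2 ξ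
    rw [gH_deriv]
    set x := Real.exp (2*ξ) with hxdef
    have hx : 0 < x := Real.exp_pos _
    obtain ⟨hApos, hBpos, hiff⟩ := quad_iff c hc hc2 x
    rw [(sign_lemma c x hx hc).1, hiff]
    set A := (-(c^2+8*c-4) - (2-c)*Real.sqrt (c^2-12*c+4))/(4*c) with hAdef
    set B := (-(c^2+8*c-4) + (2-c)*Real.sqrt (c^2-12*c+4))/(4*c) with hBdef
    constructor
    · rintro ⟨h1, h2⟩
      have hA' : Real.log A < 2*ξ := (Real.log_lt_iff_lt_exp hApos).mpr h1
      have hB' : 2*ξ < Real.log B := (Real.lt_log_iff_exp_lt hBpos).mpr h2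
      constructor <;> linarith
    · rintro ⟨h1, h2⟩
      have hA' : Real.log A < 2*ξ := by linarith
      have hB' : 2*ξ < Real.log B := by linarith
      exact ⟨(Real.log_lt_iff_lt_exp hApos).mp hA', (Real.lt_log_iff_exp_lt hBpos).mp hB'⟩
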